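/- arXiv:2303.05032 — 5 statements merged into one kernel-verified Lean document; each statement's English description precedes it below -/
import Mathlib

section
/- Let a ∈ (0,1), m ∈ [0,1], and ρ > 0 with ρ ≠ 1. Define d := [(a+m)(ρ−1)+1]² − 4·a·m·ρ·(ρ−1). Then d = [(m−a)(ρ−1)−1]² + 4·(1−a)·m·(ρ−1), and in particular d ≥ 0. -/
theorem stmt0 (a m ρ : ℝ) (ha : a ∈ Set.Ioo (0:ℝ) 1) (hm : m ∈ Set.Icc (0:ℝ) 1)
    (hρ : 0 < ρ) (hρ1 : ρ ≠ 1) :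
    ((a + m) * (ρ - 1) + 1)^2 - 4 * a * m * ρ * (ρ - 1)
      = ((m - a) * (ρ - 1) - 1)^2 + 4 * (1 - a) * m * (ρ - 1) ∧
    0 ≤ ((a + m) * (ρ - 1) + 1)^2 - 4 * a * m * ρ * (ρ - 1) := by
  obtain ⟨ha0, ha1⟩ := ha
  obtain ⟨hm0, hm1⟩ := hm
  have hid : ((a + m) * (ρ - 1) + 1)^2 - 4 * a * m * ρ * (ρ - 1)
      = ((m - a) * (ρ - 1) - 1)^2 + 4 * (1 - a) * m * (ρ - 1) := by ring
  refine ⟨hid, ?_⟩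
  rcases lt_or_gt_of_ne hρ1 with h | h
  · have h1 : 4 * a * m * ρ * (ρ - 1) ≤ 0 :=
      mul_nonpos_of_nonneg_of_nonpos
        (by positivity) (by linarith)
    nlinarith [sq_nonneg ((a + m) * (ρ - 1) + 1)]
  · rw [hid]
    have h2 : 0 ≤ 4 * (1 - a) * m * (ρ - 1) :=
      mul_nonneg (mul_nonneg (mul_nonneg (by norm_num) (by linarith)) hm0) (by linarith)
    nlinarith [sq_nonneg ((m - a) * (ρ - 1) - 1)]
end

section
/- Let a ∈ (0,1), m ∈ [0,1], ρ > 0, ρ ≠ 1, and set d := [(a+m)(ρ−1)+1]² − 4·a·m·ρ·(ρ−1). Define u := ((a+m)(ρ−1)+1 − √d) / (2a(ρ−1)) and v := ((m−a)(ρ−1)−1 + √d) / (2(1−a)(ρ−1)). Then u ∈ [0,1], v ∈ [0,1], a·u + (1−a)·v = m, and (u(1−v))/(v(1−u)) = ρ (whenever the denominators are nonzero). -/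
/-!
The mean `u` is the root of `q x = a(ρ-1)x² - ((a+m)(ρ-1)+1)x + mρ` at which `q` is decreasing,
and `v = (m - a u)/(1 - a)` is forced by the mixture equation; eliminating `v` turns the odds-ratio
equation `u(1-v) = ρ v(1-u)` into `q u = 0`. Since `q 0 = mρ ≥ 0 ≥ m - 1 = q 1`, the decreasing root
lies in `[0, 1]`, and a positive odds ratio then also keeps `v` in `[0, 1]`.
-/

open Set

theorem discrim_nonneg_of_sign_change {A b c : ℝ} (h0 : 0 ≤ c) (h1 : A + b + c ≤ 0) :
    0 ≤ discrim A b c := by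
  unfold discrim
  rcases le_total 0 A with hA | hA
  · nlinarith [sq_nonneg (2 * A + b)]
  · nlinarith [sq_nonneg b]

/-- Writing `q y = (y - r) q'(r) + A (y - r)²` shows that a root `r` with `q'(r) ≤ 0` outside
`[0, 1]` is incompatible with `q 0 ≥ 0 ≥ q 1`. -/
theorem mem_Icc_of_quadratic_eq_zero {A b c r : ℝ} (hA : A ≠ 0) (hr : A * (r * r) + b * r + c = 0)
    (hdecr : 2 * A * r + b ≤ 0) (h0 : 0 ≤ c) (h1 : A + b + c ≤ 0) : r ∈ Icc 0 1 := by
  have hc : c = -r * (2 * A * r + b) + A * (r * r) := by linear_combination hr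
  have hq_one : A + b + c = (1 - r) * (2 * A * r + b) + A * ((1 - r) * (1 - r)) := by
    linear_combination hr
  rcases hA.lt_or_gt with hA | hA
  · refine ⟨?_, by nlinarith⟩
    by_contra! hr'
    nlinarith [mul_nonneg_of_nonpos_of_nonpos hr'.le hdecr, mul_pos_of_neg_of_neg hr' hr']
  · refine ⟨by nlinarith, ?_⟩
    by_contra! hr'
    have h1r : 1 - r < 0 := by linarith
    nlinarith [mul_nonneg_of_nonpos_of_nonpos h1r.le hdecr, mul_pos_of_neg_of_neg h1r h1r]

theorem mem_Icc_of_odds_eq {u v ρ : ℝ} (hu : u ∈ Icc 0 1) (hρ : 0 < ρ)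
    (h : u * (1 - v) = ρ * (v * (1 - u))) : v ∈ Icc 0 1 := by
  obtain ⟨hu0, hu1⟩ := hu
  rcases hu1.lt_or_eq with hu1 | rfl
  · have hρu : 0 < ρ * (1 - u) := mul_pos hρ (sub_pos.2 hu1)
    constructor <;> by_contra! hv <;> nlinarith
  · have hv : v = 1 := by linear_combination -h
    simp [hv]

theorem stmt1 (a m ρ : ℝ) (ha : a ∈ Set.Ioo (0:ℝ) 1) (hm : m ∈ Set.Icc (0:ℝ) 1)
    (hρ : 0 < ρ) (hρ1 : ρ ≠ 1) :
    let d := ((a + m) * (ρ - 1) + 1)^2 - 4 * a * m * ρ * (ρ - 1)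
    let u := ((a + m) * (ρ - 1) + 1 - Real.sqrt d) / (2 * a * (ρ - 1))
    let v := ((m - a) * (ρ - 1) - 1 + Real.sqrt d) / (2 * (1 - a) * (ρ - 1))
    u ∈ Set.Icc (0:ℝ) 1 ∧ v ∈ Set.Icc (0:ℝ) 1 ∧ a * u + (1 - a) * v = m ∧
      (v * (1 - u) ≠ 0 → (u * (1 - v)) / (v * (1 - u)) = ρ) := by
  obtain ⟨ha0, ha1⟩ := ha
  intro d u v
  have hA : a * (ρ - 1) ≠ 0 := mul_ne_zero ha0.ne' (sub_ne_zero.2 hρ1)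
  have hq0 : 0 ≤ m * ρ := mul_nonneg hm.1 hρ.le
  have hq1 : a * (ρ - 1) + -((a + m) * (ρ - 1) + 1) + m * ρ ≤ 0 := by linarith [hm.2]
  have hd : discrim (a * (ρ - 1)) (-((a + m) * (ρ - 1) + 1)) (m * ρ) = d := by
    unfold discrim; ring
  have hs : discrim (a * (ρ - 1)) (-((a + m) * (ρ - 1) + 1)) (m * ρ) = √d * √d :=
    hd.trans (Real.mul_self_sqrt (hd ▸ discrim_nonneg_of_sign_change hq0 hq1)).symm
  have hqu : a * (ρ - 1) * (u * u) + -((a + m) * (ρ - 1) + 1) * u + m * ρ = 0 :=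
    (quadratic_eq_zero_iff hA hs u).2 (Or.inr (by simp only [u]; ring))
  have hdecr : 2 * (a * (ρ - 1)) * u + -((a + m) * (ρ - 1) + 1) ≤ 0 := by
    have hderiv : 2 * (a * (ρ - 1)) * u + -((a + m) * (ρ - 1) + 1) = -√d := by
      simp only [u]; field_simp; ring
    linarith [Real.sqrt_nonneg d]
  have hu : u ∈ Icc 0 1 := mem_Icc_of_quadratic_eq_zero hA hqu hdecr hq0 hq1
  have hmix : a * u + (1 - a) * v = m := by
    simp only [u, v]; field_simp [sub_ne_zero.2 hρ1, (sub_pos.2 ha1).ne']; ring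
  clear_value u v
  have hodds : u * (1 - v) = ρ * (v * (1 - u)) :=
    mul_left_cancel₀ (sub_pos.2 ha1).ne' (by linear_combination -(u + ρ * (1 - u)) * hmix - hqu)
  refine ⟨hu, mem_Icc_of_odds_eq hu hρ hodds, hmix, fun hne => ?_⟩
  rw [div_eq_iff hne]
  exact hodds
end

section
/- Let a ∈ (0,1), m ∈ [0,1], ρ > 1, and set d := [(a+m)(ρ−1)+1]² − 4·a·m·ρ·(ρ−1). Then d ≥ ((m−a)(ρ−1)−1)², so the root v₁ := ((m−a)(ρ−1)−1 − √d)/(2(1−a)(ρ−1)) satisfies v₁ < 0 whenever m > 0; similarly, if ρ < 1, then d ≥ ((a+m)(ρ−1)+1)², so the root u₁ := ((a+m)(ρ−1)+1 + √d)/(2a(ρ−1)) satisfies u₁ < 0 whenever m > 0. -/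
theorem stmt2 (a m ρ : ℝ) (ha : a ∈ Set.Ioo (0:ℝ) 1) (hm : m ∈ Set.Icc (0:ℝ) 1)
    (hρ : 0 < ρ) :
    let d := ((a + m) * (ρ - 1) + 1)^2 - 4 * a * m * ρ * (ρ - 1)
    (1 < ρ → ((m - a) * (ρ - 1) - 1)^2 ≤ d ∧
      (0 < m → ((m - a) * (ρ - 1) - 1 - Real.sqrt d) / (2 * (1 - a) * (ρ - 1)) < 0)) ∧
    (ρ < 1 → ((a + m) * (ρ - 1) + 1)^2 ≤ d ∧
      (0 < m → ((a + m) * (ρ - 1) + 1 + Real.sqrt d) / (2 * a * (ρ - 1)) < 0)) := by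
  obtain ⟨ha0, ha1⟩ := ha
  obtain ⟨hm0, hm1⟩ := hm
  intro d
  constructor
  · intro hρ1
    have hkey : ((m - a) * (ρ - 1) - 1)^2 ≤ d := by
      have : d - ((m - a) * (ρ - 1) - 1)^2 = 4 * m * (ρ - 1) * (1 - a) := by ring
      nlinarith [mul_nonneg (mul_nonneg hm0 (by linarith : (0:ℝ) ≤ ρ - 1)) (by linarith : (0:ℝ) ≤ 1 - a)]
    refine ⟨hkey, fun hmpos => ?_⟩
    have hstrict : ((m - a) * (ρ - 1) - 1)^2 < d := by
      have : d - ((m - a) * (ρ - 1) - 1)^2 = 4 * m * (ρ - 1) * (1 - a) := by ring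
      nlinarith [mul_pos (mul_pos hmpos (by linarith : (0:ℝ) < ρ - 1)) (by linarith : (0:ℝ) < 1 - a)]
    have h1 : (m - a) * (ρ - 1) - 1 < Real.sqrt d := by
      have h2 : Real.sqrt (((m - a) * (ρ - 1) - 1)^2) < Real.sqrt d :=
        Real.sqrt_lt_sqrt (sq_nonneg _) hstrict
      rw [Real.sqrt_sq_eq_abs] at h2
      exact lt_of_le_of_lt (le_abs_self _) h2
    apply div_neg_of_neg_of_pos (by linarith)
    have : (0:ℝ) < 1 - a := by linarith
    have : (0:ℝ) < ρ - 1 := by linarith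
    positivity
  · intro hρ1
    have hkey : ((a + m) * (ρ - 1) + 1)^2 ≤ d := by
      have : d - ((a + m) * (ρ - 1) + 1)^2 = 4 * a * m * ρ * (1 - ρ) := by ring
      nlinarith [mul_nonneg (mul_nonneg (mul_nonneg (le_of_lt ha0) hm0) (le_of_lt hρ)) (by linarith : (0:ℝ) ≤ 1 - ρ)]
    refine ⟨hkey, fun hmpos => ?_⟩
    have hstrict : ((a + m) * (ρ - 1) + 1)^2 < d := by
      have : d - ((a + m) * (ρ - 1) + 1)^2 = 4 * a * m * ρ * (1 - ρ) := by ring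
      nlinarith [mul_pos (mul_pos (mul_pos ha0 hmpos) hρ) (by linarith : (0:ℝ) < 1 - ρ)]
    have h1 : -((a + m) * (ρ - 1) + 1) < Real.sqrt d := by
      have h2 : Real.sqrt (((a + m) * (ρ - 1) + 1)^2) < Real.sqrt d :=
        Real.sqrt_lt_sqrt (sq_nonneg _) hstrict
      rw [Real.sqrt_sq_eq_abs] at h2
      exact lt_of_le_of_lt (neg_le_abs _) h2
    apply div_neg_of_pos_of_neg (by linarith)
    have h3 : ρ - 1 < 0 := by linarith
    nlinarith
end

section
/- Let π₁ ∈ (0,1), π₀ := 1−π₁, k > 1, and σ₁², σ₂² > 0 with 1/k ≤ σ₁²/σ₂² ≤ k. Then (1 − ((k−1)/(k+1))·|π₁−π₀|)·(σ₁²+σ₂²)/2 ≤ π₁·σ₁² + π₀·σ₂² ≤ (1 + ((k−1)/(k+1))·|π₁−π₀|)·(σ₁²+σ₂²)/2. -/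
theorem stmt7 (π₁ k s₁ s₂ : ℝ) (hπ : π₁ ∈ Set.Ioo (0:ℝ) 1) (hk : 1 < k)
    (h₁ : 0 < s₁) (h₂ : 0 < s₂) (hr₁ : 1/k ≤ s₁/s₂) (hr₂ : s₁/s₂ ≤ k) :
    (1 - (k - 1)/(k + 1) * |π₁ - (1 - π₁)|) * ((s₁ + s₂) / 2) ≤ π₁ * s₁ + (1 - π₁) * s₂ ∧
    π₁ * s₁ + (1 - π₁) * s₂ ≤ (1 + (k - 1)/(k + 1) * |π₁ - (1 - π₁)|) * ((s₁ + s₂) / 2) := by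
  obtain ⟨hπ0, hπ1⟩ := hπ
  have hk0 : (0:ℝ) < k := by linarith
  have hk1 : (0:ℝ) < k + 1 := by linarith
  have ha : s₁ ≤ k * s₂ := by
    rw [div_le_iff₀ h₂] at hr₂; linarith
  have hb : s₂ ≤ k * s₁ := by
    rw [div_le_div_iff₀ hk0 h₂] at hr₁; linarith
  have hd : |s₁ - s₂| ≤ (k - 1)/(k + 1) * (s₁ + s₂) := by
    rw [abs_le]
    constructor
    · rw [div_mul_eq_mul_div, neg_le, neg_sub, le_div_iff₀ hk1]
      nlinarith
    · rw [div_mul_eq_mul_div, le_div_iff₀ hk1]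
      nlinarith
  have heq : π₁ * s₁ + (1 - π₁) * s₂ - (s₁ + s₂) / 2 = (π₁ - (1 - π₁)) / 2 * (s₁ - s₂) := by
    ring
  have habs : |π₁ * s₁ + (1 - π₁) * s₂ - (s₁ + s₂) / 2|
      ≤ (k - 1)/(k + 1) * |π₁ - (1 - π₁)| * ((s₁ + s₂) / 2) := by
    rw [heq, abs_mul, abs_div, abs_two]
    calc |π₁ - (1 - π₁)| / 2 * |s₁ - s₂|
        ≤ |π₁ - (1 - π₁)| / 2 * ((k - 1)/(k + 1) * (s₁ + s₂)) := by
          apply mul_le_mul_of_nonneg_left hd (by positivity)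
      _ = (k - 1)/(k + 1) * |π₁ - (1 - π₁)| * ((s₁ + s₂) / 2) := by ring
  rw [abs_le] at habs
  constructor <;> nlinarith [habs.1, habs.2]
end

section
/- Fix μ ∈ (0,1) and ρ > 0, ρ ≠ 1. Let a := μρ and b := 1−μ. Define, for π ∈ ℝ, α(π) := π(ρ−1)+a+b, β(π) := √(α(π)² − 4aπ(ρ−1)) and N(π) := 2aπ(ρ−1) − (α(π)−β(π))(a+b). Then (as long as β(π) > 0) N''(π) = ((ρ−1)²/β(π)³)·(a+b)·4ab > 0, N(0) = 0 and N'(0) = 0; consequently N(π) > 0 for all π ∈ (0,1). -/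
/-!
Write `c = ρ - 1`. The radicand of `β` equals `(π c + b - a) ^ 2 + 4 a b`, which is
positive for every `π`, so `N` is smooth on all of `ℝ` and `N'' = c² (a + b) 4 a b / β³ > 0`.
Hence `N'` is strictly increasing; since `β 0 = a + b`, both `N 0` and `N' 0` vanish, so `N`
is strictly increasing on `[0, ∞)` and positive on `(0, ∞)`.
-/

open Set

section SqrtSqAdd

variable {e : ℝ}

lemma hasDerivAt_sqrt_sq_add (he : 0 < e) (t : ℝ) :
    HasDerivAt (fun t => √(t ^ 2 + e)) (t / √(t ^ 2 + e)) t := by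
  refine (((hasDerivAt_pow 2 t).add_const e).sqrt (by positivity)).congr_deriv ?_
  field_simp
  ring

lemma hasDerivAt_div_sqrt_sq_add (he : 0 < e) (t : ℝ) :
    HasDerivAt (fun t => t / √(t ^ 2 + e)) (e / √(t ^ 2 + e) ^ 3) t := by
  have hs : 0 < √(t ^ 2 + e) := by positivity
  have hsq : √(t ^ 2 + e) ^ 2 = t ^ 2 + e := Real.sq_sqrt (by positivity)
  refine ((hasDerivAt_id' t).div (hasDerivAt_sqrt_sq_add he t) hs.ne').congr_deriv ?_
  field_simp
  rw [hsq]
  ring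

end SqrtSqAdd

theorem strictMonoOn_Ici_of_hasDerivAt_of_strictMono {f f' : ℝ → ℝ} {x₀ : ℝ}
    (hf : ∀ x, HasDerivAt f (f' x) x) (hf' : StrictMono f') (hx₀ : f' x₀ = 0) :
    StrictMonoOn f (Ici x₀) := by
  refine strictMonoOn_of_deriv_pos (convex_Ici x₀)
    (fun x _ => (hf x).continuousAt.continuousWithinAt) fun x hx => ?_
  rw [interior_Ici] at hx
  rw [(hf x).deriv, ← hx₀]
  exact hf' hx

/-- The function `N` with `c = ρ - 1`, after rewriting `α x ^ 2 - 4 a x c` as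
`(x c + b - a) ^ 2 + 4 a b`, which is positive for every `x` once `a b > 0`. -/
noncomputable def oddsRatioNumerator (a b c x : ℝ) : ℝ :=
  2 * a * x * c - (x * c + a + b - √((x * c + (b - a)) ^ 2 + 4 * a * b)) * (a + b)

noncomputable def oddsRatioNumeratorDeriv (a b c x : ℝ) : ℝ :=
  c * (a - b) + (a + b) * c * ((x * c + (b - a)) / √((x * c + (b - a)) ^ 2 + 4 * a * b))

section OddsRatioNumerator

variable {a b c : ℝ}

lemma sqrt_sub_sq_add_four_mul (h : 0 ≤ a + b) : √((b - a) ^ 2 + 4 * a * b) = a + b := by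
  rw [show (b - a) ^ 2 + 4 * a * b = (a + b) ^ 2 by ring, Real.sqrt_sq h]

lemma hasDerivAt_oddsRatioNumerator (hab : 0 < a * b) (x : ℝ) :
    HasDerivAt (oddsRatioNumerator a b c) (oddsRatioNumeratorDeriv a b c x) x := by
  have hβ := (hasDerivAt_sqrt_sq_add (by linarith : 0 < 4 * a * b) (x * c + (b - a))).comp x
    ((hasDerivAt_mul_const c).add_const (b - a))
  have hα := ((hasDerivAt_mul_const (x := x) c).add_const a).add_const b
  refine ((((hasDerivAt_mul_const c).const_mul (2 * a)).sub
    ((hα.sub hβ).mul_const (a + b))).congr_deriv ?_).congr_of_eventuallyEq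
      (.of_forall fun y => ?_)
  · simp only [oddsRatioNumeratorDeriv]; ring
  · simp only [oddsRatioNumerator, Pi.sub_apply, Function.comp_apply]; ring

lemma hasDerivAt_oddsRatioNumeratorDeriv (hab : 0 < a * b) (x : ℝ) :
    HasDerivAt (oddsRatioNumeratorDeriv a b c)
      (c ^ 2 / √((x * c + (b - a)) ^ 2 + 4 * a * b) ^ 3 * (a + b) * (4 * a * b)) x := by
  have h := ((hasDerivAt_div_sqrt_sq_add (by linarith : 0 < 4 * a * b) (x * c + (b - a))).comp x
    ((hasDerivAt_mul_const c).add_const (b - a))).const_mul ((a + b) * c)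
      |>.const_add (c * (a - b))
  exact h.congr_deriv (by ring)

lemma oddsRatioNumerator_zero (h : 0 ≤ a + b) : oddsRatioNumerator a b c 0 = 0 := by
  simp only [oddsRatioNumerator, zero_mul, zero_add, sqrt_sub_sq_add_four_mul h]
  ring

lemma oddsRatioNumeratorDeriv_zero (h : 0 < a + b) : oddsRatioNumeratorDeriv a b c 0 = 0 := by
  simp only [oddsRatioNumeratorDeriv, zero_mul, zero_add, sqrt_sub_sq_add_four_mul h.le]
  field_simp
  ring

lemma strictMono_oddsRatioNumeratorDeriv (ha : 0 < a) (hb : 0 < b) (hc : c ≠ 0) :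
    StrictMono (oddsRatioNumeratorDeriv a b c) :=
  strictMono_of_hasDerivAt_pos (hasDerivAt_oddsRatioNumeratorDeriv (mul_pos ha hb))
    fun _ => by positivity

lemma oddsRatioNumerator_pos (ha : 0 < a) (hb : 0 < b) (hc : c ≠ 0) {x : ℝ} (hx : 0 < x) :
    0 < oddsRatioNumerator a b c x := by
  have hmono := strictMonoOn_Ici_of_hasDerivAt_of_strictMono
    (hasDerivAt_oddsRatioNumerator (mul_pos ha hb))
    (strictMono_oddsRatioNumeratorDeriv ha hb hc)
    (oddsRatioNumeratorDeriv_zero (add_pos ha hb))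
  simpa only [oddsRatioNumerator_zero (add_pos ha hb).le] using hmono self_mem_Ici hx.le hx

end OddsRatioNumerator

theorem stmt11 (μ ρ : ℝ) (hμ : μ ∈ Set.Ioo (0:ℝ) 1) (hρ : 0 < ρ) (hρ1 : ρ ≠ 1) :
    let a := μ * ρ
    let b := 1 - μ
    let α : ℝ → ℝ := fun π => π * (ρ - 1) + a + b
    let β : ℝ → ℝ := fun π => Real.sqrt ((α π)^2 - 4 * a * π * (ρ - 1))
    let N : ℝ → ℝ := fun π => 2 * a * π * (ρ - 1) - (α π - β π) * (a + b)
    (∀ π : ℝ, 0 < β π →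
      deriv (deriv N) π = (ρ - 1)^2 / (β π)^3 * (a + b) * (4 * a * b) ∧
      0 < deriv (deriv N) π) ∧
    N 0 = 0 ∧ deriv N 0 = 0 ∧ ∀ π ∈ Set.Ioo (0:ℝ) 1, 0 < N π := by
  intro a b α β N
  have ha : 0 < a := mul_pos hμ.1 hρ
  have hb : 0 < b := sub_pos.mpr hμ.2
  have hc : ρ - 1 ≠ 0 := sub_ne_zero.mpr hρ1
  have hβ (x : ℝ) : β x = √((x * (ρ - 1) + (b - a)) ^ 2 + 4 * a * b) :=
    congrArg Real.sqrt (by ring)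
  have hN : N = oddsRatioNumerator a b (ρ - 1) := funext fun x => by
    simp only [N, α, hβ, oddsRatioNumerator]
  have hN' : deriv N = oddsRatioNumeratorDeriv a b (ρ - 1) := funext fun x => by
    rw [hN]; exact (hasDerivAt_oddsRatioNumerator (mul_pos ha hb) x).deriv
  have hN'' (x : ℝ) : deriv (deriv N) x = (ρ - 1) ^ 2 / β x ^ 3 * (a + b) * (4 * a * b) := by
    rw [hN', hβ]; exact (hasDerivAt_oddsRatioNumeratorDeriv (mul_pos ha hb) x).deriv
  refine ⟨fun x hx => ⟨hN'' x, ?_⟩, hN ▸ oddsRatioNumerator_zero (add_pos ha hb).le,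
    hN' ▸ oddsRatioNumeratorDeriv_zero (add_pos ha hb),
    fun x hx => hN ▸ oddsRatioNumerator_pos ha hb hc hx.1⟩
  rw [hN'']
  have := pow_two_pos_of_ne_zero hc
  positivity
end
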